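/- arXiv:2601.03910 — 7 statements merged into one kernel-verified Lean document; each statement's English description precedes it below -/
import Mathlib

section
/- Let μ be a generalized T-permutant measure on X^Y. Then the operator F_μ : ℝ^X → ℝ^Y defined by F_μ(φ) = Σ_{h ∈ X^Y} (φ ∘ h) · μ(h) is linear and T-equivariant, i.e., F_μ(φ ∘ g) = F_μ(φ) ∘ T(g) for every φ ∈ ℝ^X and g ∈ G. -/
open Function

section

variable {X Y : Type*} [Fintype X] [Fintype Y] [DecidableEq Y]

def weightedCompOperator (R : Type*) [CommSemiring R] (μ : (Y → X) → R) :
    (X → R) →ₗ[R] (Y → R) where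
  toFun φ y := ∑ h : Y → X, φ (h y) * μ h
  map_add' φ ψ := by
    funext y
    simp only [Pi.add_apply, add_mul, Finset.sum_add_distrib]
  map_smul' a φ := by
    funext y
    simp only [Pi.smul_apply, smul_eq_mul, RingHom.id_apply, Finset.mul_sum, mul_assoc]

theorem weightedCompOperator_apply {R : Type*} [CommSemiring R] (μ : (Y → X) → R)
    (φ : X → R) (y : Y) :
    weightedCompOperator R μ φ y = ∑ h : Y → X, φ (h y) * μ h :=
  rfl

theorem weightedCompOperator_comp_of_invariant {R : Type*} [CommSemiring R]
    (μ : (Y → X) → R) (σ : Equiv.Perm X) (τ : Equiv.Perm Y)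
    (hμ : ∀ h, μ (Equiv.arrowCongr τ σ h) = μ h) (φ : X → R) :
    weightedCompOperator R μ (φ ∘ σ) = weightedCompOperator R μ φ ∘ τ := by
  funext y
  simp only [comp_apply, weightedCompOperator_apply]
  refine Fintype.sum_equiv (Equiv.arrowCongr τ σ) _ _ fun h => ?_
  rw [hμ, Equiv.arrowCongr_apply, comp_apply, comp_apply, Equiv.symm_apply_apply]

end

theorem stmt_1_general {X Y : Type*} [Fintype X] [Fintype Y] [DecidableEq Y]
    (G : Subgroup (Equiv.Perm X)) (K : Subgroup (Equiv.Perm Y)) (T : G →* K)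
    (μ : (Y → X) → ℝ)
    (hμ : ∀ (g : G) (h : Y → X),
      μ h = μ (⇑(g : Equiv.Perm X) ∘ h ∘ ⇑((T g⁻¹ : K) : Equiv.Perm Y)))
    (F : (X → ℝ) → (Y → ℝ))
    (hF : ∀ φ : X → ℝ, F φ = fun y => ∑ h : Y → X, φ (h y) * μ h) :
    (∀ (a b : ℝ) (φ ψ : X → ℝ), F (a • φ + b • ψ) = a • F φ + b • F ψ) ∧
    (∀ (g : G) (φ : X → ℝ),
      F (φ ∘ ⇑(g : Equiv.Perm X)) = F φ ∘ ⇑((T g : K) : Equiv.Perm Y)) := by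
  have hF' : F = weightedCompOperator ℝ μ := funext hF
  subst hF'
  refine ⟨fun a b φ ψ => by rw [map_add, map_smul, map_smul], fun g φ => ?_⟩
  refine weightedCompOperator_comp_of_invariant μ _ _ (fun h => ?_) φ
  rw [hμ g h, map_inv, InvMemClass.coe_inv, Equiv.Perm.inv_def]
  rfl

/-- If `μ` is a generalized `T`-permutant measure on `X^Y`, then
`F_μ(φ) = Σ_h (φ ∘ h) μ(h)` is linear and `T`-equivariant. -/
theorem stmt_1 {X Y : Type*} [Fintype X] [Fintype Y] [DecidableEq X] [DecidableEq Y]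
    (G : Subgroup (Equiv.Perm X)) (K : Subgroup (Equiv.Perm Y)) (T : G →* K)
    (μ : (Y → X) → ℝ)
    (hμ : ∀ (g : G) (h : Y → X),
      μ h = μ (⇑(g : Equiv.Perm X) ∘ h ∘ ⇑((T g⁻¹ : K) : Equiv.Perm Y)))
    (F : (X → ℝ) → (Y → ℝ))
    (hF : ∀ φ : X → ℝ, F φ = fun y => ∑ h : Y → X, φ (h y) * μ h) :
    (∀ (a b : ℝ) (φ ψ : X → ℝ), F (a • φ + b • ψ) = a • F φ + b • F ψ) ∧
    (∀ (g : G) (φ : X → ℝ),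
      F (φ ∘ ⇑(g : Equiv.Perm X)) = F φ ∘ ⇑((T g : K) : Equiv.Perm Y)) :=
  stmt_1_general G K T μ hμ F hF
end

section
/- Suppose T(G) acts transitively on Y and F : ℝ^X → ℝ^Y is a linear T-equivariant map with matrix B. Then there exists an n-tuple β = (β_1,…,β_n) of real numbers such that every row of B is a permutation of β. -/
/-- If `T(G)` acts transitively on `Y = Fin m` and `F` is a linear
`T`-equivariant map with matrix `B`, then there is an `n`-tuple `β` such that
every row of `B` is a permutation of `β`. -/
theorem stmt_3 {n m : ℕ}
    (G : Subgroup (Equiv.Perm (Fin n))) (K : Subgroup (Equiv.Perm (Fin m)))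
    (T : G →* K)
    (htrans : ∀ i i' : Fin m, ∃ g : G, ((T g : K) : Equiv.Perm (Fin m)) i = i')
    (F : (Fin n → ℝ) →ₗ[ℝ] (Fin m → ℝ))
    (hequiv : ∀ (g : G) (φ : Fin n → ℝ),
      F (φ ∘ ⇑(g : Equiv.Perm (Fin n))) = F φ ∘ ⇑((T g : K) : Equiv.Perm (Fin m)))
    (B : Matrix (Fin m) (Fin n) ℝ)
    (hB : ∀ j : Fin n,
      F (fun x => if x = j then (1 : ℝ) else 0) = fun i => B i j) :
    ∃ β : Fin n → ℝ, ∀ i : Fin m, ∃ σ : Equiv.Perm (Fin n), ∀ j, B i j = β (σ j) := by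
  rcases isEmpty_or_nonempty (Fin m) with hm | hm
  · exact ⟨0, fun i => isEmptyElim i⟩
  · obtain ⟨i₀⟩ := hm
    refine ⟨fun j => B i₀ j, fun i => ?_⟩
    obtain ⟨g, hg⟩ := htrans i₀ i
    refine ⟨((g : Equiv.Perm (Fin n))).symm, fun j => ?_⟩
    have hcomp : (fun x => if x = j then (1 : ℝ) else 0) ∘ ⇑(g : Equiv.Perm (Fin n))
        = fun x => if x = (g : Equiv.Perm (Fin n)).symm j then (1 : ℝ) else 0 := by
      funext x
      simp [Function.comp, Equiv.apply_eq_iff_eq_symm_apply]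
    have h := congrFun (hequiv g (fun x => if x = j then (1 : ℝ) else 0)) i₀
    rw [hcomp, hB, hB] at h
    simp only [Function.comp_apply, hg] at h
    exact h.symm
end

section
/- Let F : ℝ^X → ℝ^Y be linear with matrix B, and decompose B = B⁺ − B⁻ into its entrywise positive and negative parts. Suppose B⁺ = Σ_h c⁺(h) R(h) and B⁻ = Σ_h c⁻(h) R(h) with all coefficients c⁺(h), c⁻(h) ≥ 0 over functions h : Y → X with rectangular permutation matrices R(h). If h₁, h₂ : Y → X agree at some point y_t, then c⁺(h₁) = 0 or c⁻(h₂) = 0. -/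
/-- The rectangular permutation matrix associated with a function `h : Y → X`
(rows indexed by `Y`, columns by `X`). -/
def rectMatrix {Y X : Type*} [DecidableEq X] (h : Y → X) : Matrix Y X ℝ :=
  Matrix.of fun i j => if h i = j then (1 : ℝ) else 0

/-- If `B⁺ = Σ_h cp(h) R(h)` and `B⁻ = Σ_h cm(h) R(h)` are the positive and
negative parts of a matrix `B`, with nonnegative coefficients, and
`h₁, h₂ : Y → X` agree at some point, then `cp(h₁) = 0` or `cm(h₂) = 0`. -/
theorem stmt_5 {n m : ℕ} (B : Matrix (Fin m) (Fin n) ℝ)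
    (cp cm : (Fin m → Fin n) → ℝ)
    (hcp : ∀ h, 0 ≤ cp h) (hcm : ∀ h, 0 ≤ cm h)
    (hBp : (Matrix.of fun i j => max (B i j) 0) =
      ∑ h : Fin m → Fin n, cp h • rectMatrix h)
    (hBm : (Matrix.of fun i j => max (-(B i j)) 0) =
      ∑ h : Fin m → Fin n, cm h • rectMatrix h)
    (h₁ h₂ : Fin m → Fin n) (t : Fin m) (hagree : h₁ t = h₂ t) :
    cp h₁ = 0 ∨ cm h₂ = 0 := by
  set j := h₁ t with hj
  have key : ∀ (c : (Fin m → Fin n) → ℝ) (h₀ : Fin m → Fin n), (∀ h, 0 ≤ c h) →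
      h₀ t = j → c h₀ ≤ (∑ h : Fin m → Fin n, c h • rectMatrix h) t j := by
    intro c h₀ hc ht
    have := Finset.single_le_sum (f := fun h => (c h • rectMatrix h) t j)
      (fun h _ => by
        simp only [Matrix.smul_apply, rectMatrix, Matrix.of_apply, smul_eq_mul]
        exact mul_nonneg (hc h) (by positivity))
      (Finset.mem_univ h₀)
    simp only [Matrix.smul_apply, rectMatrix, Matrix.of_apply, smul_eq_mul, ht,
      if_pos rfl, mul_one] at this
    simpa [Matrix.sum_apply, Matrix.smul_apply, rectMatrix, mul_ite] using this
  have h1 : cp h₁ ≤ max (B t j) 0 := by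
    have := key cp h₁ hcp rfl
    rw [← hBp] at this; simpa using this
  have h2 : cm h₂ ≤ max (-(B t j)) 0 := by
    have := key cm h₂ hcm hagree.symm
    rw [← hBm] at this; simpa using this
  by_contra hcon
  push_neg at hcon
  obtain ⟨hp, hm⟩ := hcon
  have hp' : 0 < cp h₁ := lt_of_le_of_ne (hcp h₁) (Ne.symm hp)
  have hm' : 0 < cm h₂ := lt_of_le_of_ne (hcm h₂) (Ne.symm hm)
  have b1 : 0 < B t j := by
    have := lt_of_lt_of_le hp' h1
    rcases le_or_gt (B t j) 0 with h | h
    · simp [max_eq_right h] at this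
    · exact h
  have b2 : 0 < -(B t j) := by
    have := lt_of_lt_of_le hm' h2
    rcases le_or_gt (-(B t j)) 0 with h | h
    · simp [max_eq_right h] at this
    · exact h
  linarith
end

section
/- Assume T(G) acts transitively on the finite set Y, and let F : ℝ^X → ℝ^Y be a map. Then (F, T) is a linear group equivariant operator (i.e., F is linear and F(φ ∘ g) = F(φ) ∘ T(g) for all φ, g) if and only if there exists a generalized T-permutant measure μ on X^Y such that F(φ) = Σ_{h ∈ X^Y} (φ ∘ h) μ(h) for every φ ∈ ℝ^X. -/
open Finset

private lemma sum_update_eq {X Y : Type*} [Fintype X] [Fintype Y] [DecidableEq X] [DecidableEq Y]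
    (c : Y → X) (y' : Y) (f : (Y → X) → ℝ) :
    ∑ h : Y → X, (if h = Function.update c y' (h y') then f h else 0)
      = ∑ x' : X, f (Function.update c y' x') := by
  have h1 : ∀ h : Y → X,
      (if h = Function.update c y' (h y') then f h else 0)
        = ∑ x' : X, (if h = Function.update c y' x' then f h else 0) := by
    intro h
    rw [Finset.sum_eq_single (h y')]
    · intro x' _ hx'
      rw [if_neg]
      intro hh
      apply hx'
      have := congrFun hh y'
      rw [Function.update_self] at this
      exact this.symm
    · intro hmem; exact absurd (mem_univ _) hmem
  simp_rw [h1]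
  rw [Finset.sum_comm]
  refine Finset.sum_congr rfl fun x' _ => ?_
  rw [Finset.sum_eq_single (Function.update c y' x')]
  · rw [if_pos rfl]
  · intro h _ hne; rw [if_neg hne]
  · intro hmem; exact absurd (mem_univ _) hmem

private lemma marg_lemma {X Y : Type*} [Fintype X] [Fintype Y] [DecidableEq X] [DecidableEq Y]
    (a : Y → X → ℝ) (S : ℝ) (hS : ∀ y, ∑ x : X, a y x = S) (x₀ : X) (y : Y) (x : X) :
    (∑ h : Y → X, if h y = x then
        ((∑ y' : Y, if h = Function.update (fun _ => x₀) y' (h y') then a y' (h y') else 0)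
          - (if h = (fun _ => x₀) then ((Fintype.card Y - 1 : ℕ) : ℝ) * S else 0)) else 0)
      = a y x := by
  set c : Y → X := fun _ => x₀ with hc
  set A : ℝ := ((Fintype.card Y - 1 : ℕ) : ℝ) * S with hA
  have expand : ∀ h : Y → X, (if h y = x then
        ((∑ y' : Y, if h = Function.update c y' (h y') then a y' (h y') else 0)
          - (if h = c then A else 0)) else 0)
      = (∑ y' : Y, if h y = x then (if h = Function.update c y' (h y') then a y' (h y') else 0) else 0)
        - (if h y = x then (if h = c then A else 0) else 0) := by
    intro h; by_cases hp : h y = x <;> simp [hp]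
  simp_rw [expand]
  rw [Finset.sum_sub_distrib]
  have second : (∑ h : Y → X, if h y = x then (if h = c then A else 0) else 0)
      = if x₀ = x then A else 0 := by
    have : ∀ h : Y → X, (if h y = x then (if h = c then A else 0) else 0)
        = if h = c then (if x₀ = x then A else 0) else 0 := by
      intro h
      by_cases h1 : h = c
      · subst h1; simp [hc]
      · simp [h1]
    simp_rw [this]
    rw [Finset.sum_ite_eq' univ c (fun _ => if x₀ = x then A else 0), if_pos (mem_univ _)]
  rw [second, Finset.sum_comm]
  have key : ∀ y' : Y,
      (∑ h : Y → X, if h y = x then (if h = Function.update c y' (h y') then a y' (h y') else 0) else 0)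
        = ∑ x' : X, if Function.update c y' x' y = x then a y' x' else 0 := by
    intro y'
    have step1 : ∀ h : Y → X,
        (if h y = x then (if h = Function.update c y' (h y') then a y' (h y') else 0) else 0)
          = (if h = Function.update c y' (h y') then (if h y = x then a y' (h y') else 0) else 0) := by
      intro h; split_ifs <;> rfl
    simp_rw [step1]
    rw [sum_update_eq c y' (fun h => if h y = x then a y' (h y') else 0)]
    refine Finset.sum_congr rfl fun x' _ => ?_
    rw [Function.update_self]
  simp_rw [key]
  rw [← Finset.add_sum_erase univ _ (mem_univ y)]
  have term_y : (∑ x' : X, if Function.update c y x' y = x then a y x' else 0) = a y x := by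
    simp_rw [Function.update_self]
    rw [Finset.sum_ite_eq' univ x (a y), if_pos (mem_univ _)]
  have term_rest : ∀ y' ∈ univ.erase y,
      (∑ x' : X, if Function.update c y' x' y = x then a y' x' else 0)
        = if x₀ = x then S else 0 := by
    intro y' hy'
    have hne : y ≠ y' := fun h => (Finset.mem_erase.mp hy').1 h.symm
    have hupd : ∀ x' : X, Function.update c y' x' y = x₀ := fun x' =>
      Function.update_of_ne hne x' c
    simp_rw [hupd]
    by_cases hx : x₀ = x
    · simp [hx, hS y']
    · simp [hx]
  rw [Finset.sum_congr rfl term_rest, Finset.sum_const, term_y,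
    Finset.card_erase_of_mem (mem_univ y), Finset.card_univ]
  by_cases hx : x₀ = x <;> simp [hx, nsmul_eq_mul, hA]

private lemma rep_lemma {X Y : Type*} [Fintype X] [Fintype Y] [DecidableEq X]
    (F : (X → ℝ) → (Y → ℝ))
    (hadd : ∀ φ ψ : X → ℝ, F (φ + ψ) = F φ + F ψ)
    (hsmul : ∀ (c : ℝ) (φ : X → ℝ), F (c • φ) = c • F φ) :
    ∀ φ : X → ℝ, F φ = fun y => ∑ x : X, φ x * F (fun z => if z = x then 1 else 0) y := by
  set δ : X → X → ℝ := fun x z => if z = x then 1 else 0 with hδ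
  have h0 : F 0 = 0 := by
    have := hadd 0 0
    rw [add_zero] at this
    exact (left_eq_add.mp this)
  have hsumF : ∀ (s : Finset X) (φ : X → ℝ),
      F (fun z => ∑ x ∈ s, φ x * δ x z) = fun y => ∑ x ∈ s, φ x * F (δ x) y := by
    intro s φ
    induction s using Finset.induction_on with
    | empty =>
        have : (fun z => ∑ x ∈ (∅ : Finset X), φ x * δ x z) = (0 : X → ℝ) := by
          funext z; simp
        rw [this, h0]; funext y; simp
    | @insert x s hx ih =>
        have : (fun z => ∑ x' ∈ insert x s, φ x' * δ x' z)
            = (φ x • δ x) + (fun z => ∑ x' ∈ s, φ x' * δ x' z) := by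
          funext z; simp [Finset.sum_insert hx]
        rw [this, hadd, hsmul, ih]
        funext y
        simp [Finset.sum_insert hx]
  intro φ
  have hφ : φ = fun z => ∑ x : X, φ x * δ x z := by
    funext z; simp [hδ, mul_ite]
  conv_lhs => rw [hφ]
  exact hsumF univ φ

/-- Representation theorem for linear GEOs: assuming `T(G)` acts transitively
on the finite set `Y`, a map `F : ℝ^X → ℝ^Y` is a linear `T`-equivariant
operator iff it is represented by a generalized `T`-permutant measure. -/
theorem stmt_7 {X Y : Type*} [Fintype X] [Fintype Y] [DecidableEq Y]
    (G : Subgroup (Equiv.Perm X)) (K : Subgroup (Equiv.Perm Y)) (T : G →* K)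
    (htrans : ∀ y y' : Y, ∃ g : G, ((T g : K) : Equiv.Perm Y) y = y')
    (F : (X → ℝ) → (Y → ℝ)) :
    ((∀ φ ψ : X → ℝ, F (φ + ψ) = F φ + F ψ) ∧
     (∀ (c : ℝ) (φ : X → ℝ), F (c • φ) = c • F φ) ∧
     (∀ (g : G) (φ : X → ℝ),
       F (φ ∘ ⇑(g : Equiv.Perm X)) = F φ ∘ ⇑((T g : K) : Equiv.Perm Y))) ↔
    (∃ μ : (Y → X) → ℝ,
      (∀ (g : G) (h : Y → X),
        μ h = μ (⇑(g : Equiv.Perm X) ∘ h ∘ ⇑((T g⁻¹ : K) : Equiv.Perm Y))) ∧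
      (∀ φ : X → ℝ, F φ = fun y => ∑ h : Y → X, φ (h y) * μ h)) := by
  classical
  constructor
  · rintro ⟨hadd, hsmul, hequiv⟩
    by_cases hY : Nonempty Y
    swap
    · exact ⟨fun _ => 0, fun g h => rfl, fun φ => funext fun y => absurd ⟨y⟩ hY⟩
    by_cases hX : Nonempty X
    swap
    · refine ⟨fun _ => 0, fun g h => rfl, fun φ => ?_⟩
      have hφ : φ = (0:ℝ) • φ := funext fun x => absurd ⟨x⟩ hX
      have hF : F φ = (0:ℝ) • F φ := by conv_lhs => rw [hφ, hsmul]
      have hE : IsEmpty (Y → X) := ⟨fun h => hX ⟨h (Classical.arbitrary Y)⟩⟩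
      rw [hF]; funext y; simp
    obtain ⟨x₀⟩ := hX
    obtain ⟨y₀⟩ := hY
    set δ : X → X → ℝ := fun x z => if z = x then 1 else 0 with hδ
    set a : Y → X → ℝ := fun y x => F (δ x) y with ha_def
    have hrepa : ∀ φ : X → ℝ, F φ = fun y => ∑ x : X, φ x * a y x :=
      rep_lemma F hadd hsmul
    have ha : ∀ (g : G) (y : Y) (x : X),
        a (((T g : K) : Equiv.Perm Y) y) ((g : Equiv.Perm X) x) = a y x := by
      intro g y x
      have h1 : δ x ∘ ⇑((g⁻¹ : G) : Equiv.Perm X) = δ (((g : G) : Equiv.Perm X) x) := by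
        funext z
        simp only [hδ, Function.comp_apply, InvMemClass.coe_inv, Equiv.Perm.inv_def,
          Equiv.symm_apply_eq]
      have h2 := hequiv g⁻¹ (δ x)
      rw [h1] at h2
      show F (δ _) _ = F (δ x) y
      rw [h2]
      simp [map_inv, Equiv.Perm.inv_def]
    set S : ℝ := ∑ x : X, a y₀ x with hSdef
    have hS : ∀ y : Y, ∑ x : X, a y x = S := by
      intro y
      obtain ⟨g, hg⟩ := htrans y₀ y
      rw [← hg,
        ← Equiv.sum_comp ((g : Equiv.Perm X) : X ≃ X) (a (((T g : K) : Equiv.Perm Y) y₀))]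
      exact Finset.sum_congr rfl fun x _ => ha g y₀ x
    set ν : (Y → X) → ℝ := fun h =>
      (∑ y' : Y, if h = Function.update (fun _ => x₀) y' (h y') then a y' (h y') else 0)
        - (if h = (fun _ => x₀) then ((Fintype.card Y - 1 : ℕ) : ℝ) * S else 0) with hν
    have hmarg : ∀ (y : Y) (x : X), (∑ h : Y → X, if h y = x then ν h else 0) = a y x :=
      fun y x => marg_lemma a S hS x₀ y x
    haveI : Fintype G := Fintype.ofFinite G
    haveI : Nonempty G := ⟨1⟩
    set cG : ℝ := (Fintype.card G : ℝ) with hcG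
    have hcG0 : cG ≠ 0 := Nat.cast_ne_zero.mpr Fintype.card_ne_zero
    set μ : (Y → X) → ℝ := fun h =>
      cG⁻¹ * ∑ g : G, ν (⇑((g : G) : Equiv.Perm X) ∘ h ∘ ⇑((T g⁻¹ : K) : Equiv.Perm Y)) with hμ
    have hcomp : ∀ (g g₀ : G) (h : Y → X),
        ⇑((g : G) : Equiv.Perm X) ∘
            (⇑((g₀ : G) : Equiv.Perm X) ∘ h ∘ ⇑((T g₀⁻¹ : K) : Equiv.Perm Y)) ∘
            ⇑((T g⁻¹ : K) : Equiv.Perm Y)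
          = ⇑(((g * g₀ : G) : G) : Equiv.Perm X) ∘ h ∘ ⇑((T (g * g₀)⁻¹ : K) : Equiv.Perm Y) := by
      intro g g₀ h
      funext z
      simp [mul_inv_rev, map_mul, map_inv, Subgroup.coe_mul, Equiv.Perm.mul_apply]
    refine ⟨μ, ?_, ?_⟩
    · intro g₀ h
      simp only [hμ]
      congr 1
      refine Fintype.sum_equiv (Equiv.mulRight g₀⁻¹) _ _ (fun g => ?_)
      simp only [Equiv.coe_mulRight]
      rw [hcomp (g * g₀⁻¹) g₀ h, inv_mul_cancel_right]
    · intro φ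
      funext y
      rw [hrepa φ]
      have hper : ∀ g : G,
          (∑ h : Y → X, φ (h y) * ν (⇑((g : G) : Equiv.Perm X) ∘ h ∘ ⇑((T g⁻¹ : K) : Equiv.Perm Y)))
            = ∑ x : X, φ x * a y x := by
        intro g
        set e : (Y → X) ≃ (Y → X) :=
          Equiv.arrowCongr (((T g : K) : Equiv.Perm Y) : Y ≃ Y) (((g : G) : Equiv.Perm X) : X ≃ X)
          with he
        have hee : ∀ h : Y → X,
            e h = ⇑((g : G) : Equiv.Perm X) ∘ h ∘ ⇑((T g⁻¹ : K) : Equiv.Perm Y) := by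
          intro h; funext z
          simp [he, map_inv, Equiv.Perm.inv_def]
        have hesymm : ∀ h : Y → X,
            e.symm h = ⇑(((g : G) : Equiv.Perm X) : X ≃ X).symm ∘ h ∘ ⇑((T g : K) : Equiv.Perm Y) := by
          intro h; funext z
          simp [he]
        calc (∑ h : Y → X, φ (h y) * ν (⇑((g : G) : Equiv.Perm X) ∘ h ∘ ⇑((T g⁻¹ : K) : Equiv.Perm Y)))
            = ∑ h : Y → X, φ ((e.symm h) y) * ν h := by
              refine Fintype.sum_equiv e _ _ (fun h => ?_)
              rw [Equiv.symm_apply_apply, hee]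
          _ = ∑ h : Y → X,
                φ ((((g : G) : Equiv.Perm X) : X ≃ X).symm (h (((T g : K) : Equiv.Perm Y) y))) * ν h := by
              refine Finset.sum_congr rfl fun h _ => ?_
              rw [hesymm]
              rfl
          _ = ∑ h : Y → X, ∑ x : X,
                (if h (((T g : K) : Equiv.Perm Y) y) = x then
                  φ ((((g : G) : Equiv.Perm X) : X ≃ X).symm x) * ν h else 0) := by
              refine Finset.sum_congr rfl fun h _ => ?_
              rw [Finset.sum_ite_eq univ (h (((T g : K) : Equiv.Perm Y) y))
                (fun x => φ ((((g : G) : Equiv.Perm X) : X ≃ X).symm x) * ν h),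
                if_pos (mem_univ _)]
          _ = ∑ x : X,
                φ ((((g : G) : Equiv.Perm X) : X ≃ X).symm x) * a (((T g : K) : Equiv.Perm Y) y) x := by
              rw [Finset.sum_comm]
              refine Finset.sum_congr rfl fun x _ => ?_
              rw [← hmarg (((T g : K) : Equiv.Perm Y) y) x, Finset.mul_sum]
              refine Finset.sum_congr rfl fun h _ => ?_
              by_cases hcond : h (((T g : K) : Equiv.Perm Y) y) = x <;> simp [hcond]
          _ = ∑ x : X, φ x * a y x := by
              rw [← Equiv.sum_comp (((g : G) : Equiv.Perm X) : X ≃ X)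
                (fun x => φ ((((g : G) : Equiv.Perm X) : X ≃ X).symm x)
                  * a (((T g : K) : Equiv.Perm Y) y) x)]
              refine Finset.sum_congr rfl fun x _ => ?_
              simp only [Equiv.symm_apply_apply]
              rw [ha g y x]
      calc (∑ x : X, φ x * a y x)
          = cG⁻¹ * ∑ g : G, ∑ x : X, φ x * a y x := by
            rw [Finset.sum_const, Finset.card_univ, nsmul_eq_mul, ← mul_assoc,
              inv_mul_cancel₀ hcG0, one_mul]
        _ = cG⁻¹ * ∑ g : G, ∑ h : Y → X,
              φ (h y) * ν (⇑((g : G) : Equiv.Perm X) ∘ h ∘ ⇑((T g⁻¹ : K) : Equiv.Perm Y)) := by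
            rw [Finset.sum_congr rfl fun g _ => (hper g).symm]
        _ = ∑ h : Y → X, φ (h y) * μ h := by
            rw [Finset.sum_comm, Finset.mul_sum]
            refine Finset.sum_congr rfl fun h _ => ?_
            have hμh : μ h = cG⁻¹ * ∑ g : G,
                ν (⇑((g : G) : Equiv.Perm X) ∘ h ∘ ⇑((T g⁻¹ : K) : Equiv.Perm Y)) := rfl
            rw [hμh]
            simp only [Finset.mul_sum]
            exact Finset.sum_congr rfl fun g _ => by ring
  · rintro ⟨μ, hinv, hrep⟩
    refine ⟨?_, ?_, ?_⟩
    · intro φ ψ; rw [hrep, hrep, hrep]; funext y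
      simp [add_mul, Finset.sum_add_distrib]
    · intro c φ; rw [hrep, hrep]; funext y
      simp [Finset.mul_sum, mul_assoc]
    · intro g φ
      rw [hrep, hrep]
      funext y
      simp only [Function.comp_apply]
      have hc : ⇑((T g⁻¹ : K) : Equiv.Perm Y) = ⇑(((T g : K) : Equiv.Perm Y)).symm := by
        simp [map_inv, Equiv.Perm.inv_def]
      refine Fintype.sum_equiv
        (Equiv.arrowCongr (((T g : K) : Equiv.Perm Y) : Y ≃ Y) ((g : Equiv.Perm X) : X ≃ X))
        _ _ (fun h => ?_)
      simp only [Equiv.arrowCongr_apply, Function.comp_apply, Equiv.symm_apply_apply]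
      congr 1
      rw [hinv g h]
      congr 1
      funext z
      simp [hc, Equiv.Perm.inv_def]
end

section
/- Assume T(G) acts transitively on Y and let F : ℝ^X → ℝ^Y be a linear T-equivariant map. Then there exists a generalized T-permutant measure μ with F(φ) = Σ_{h ∈ X^Y} (φ ∘ h) μ(h) such that Σ_{h ∈ X^Y} |μ(h)| equals the operator norm of F with respect to the sup norms, i.e., max over nonzero φ of ‖F(φ)‖_∞ / ‖φ‖_∞. -/
/-!
The matrix `A y x = F (Pi.single x 1) y` of an equivariant `F` satisfies
`A (T g y) (g x) = A y x`, so by transitivity every row of `A` is a rearrangement of the row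
`y₀`. Hence the positive parts of the rows all have the same sum `P`, and the negative parts the
same sum `M`. The independent coupling of the rows `(A y ·)⁺ / P`, scaled by `P`, is a measure on
`Y → X` with marginals `(A y ·)⁺`; subtracting the analogous measure for the negative parts gives
a representing `μ`. It is invariant because `g` permutes the rows, and its total variation is at
most `P + M = ∑ x, |A y₀ x|`. This common absolute row sum is the sup-norm operator norm of `A`,
attained at the sign vector of row `y₀`, while any representing measure has total variation at
least the operator norm.
-/

open Finset Matrix

section Equivariance

variable {X Y : Type*} [Fintype X]

theorem LinearMap.toMatrix'_perm_apply_perm [DecidableEq X] {F : (X → ℝ) →ₗ[ℝ] (Y → ℝ)}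
    {σ : Equiv.Perm X} {e : Equiv.Perm Y} (hF : ∀ φ, F (φ ∘ ⇑σ) = F φ ∘ ⇑e) (y : Y) (x : X) :
    LinearMap.toMatrix' F (e y) (σ x) = LinearMap.toMatrix' F y x := by
  simp only [LinearMap.toMatrix'_apply]
  rw [← Function.comp_apply (f := F (Pi.single (σ x) 1)), ← hF, Pi.single_comp_equiv,
    Equiv.symm_apply_apply]

theorem Matrix.sum_comp_perm_row {A : Matrix Y X ℝ} {σ : Equiv.Perm X} {e : Equiv.Perm Y}
    (hA : ∀ y x, A (e y) (σ x) = A y x) (f : ℝ → ℝ) (y : Y) :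
    ∑ x, f (A (e y) x) = ∑ x, f (A y x) := by
  rw [← Equiv.sum_comp σ]
  simp only [hA]

end Equivariance

section ProductMeasure

variable {X Y : Type*} [Fintype Y]

/-- For `w ≥ 0` whose rows all sum to `s`, the independent coupling of the rows of `w`:
a measure on `Y → X` of total mass `s` whose marginal at `y` is `w y`. -/
noncomputable def prodMeasure (w : Y → X → ℝ) (s : ℝ) (h : Y → X) : ℝ :=
  s * ∏ y, (w y (h y) / s)

variable {w : Y → X → ℝ} {s : ℝ}

theorem prodMeasure_nonneg (hw : ∀ y x, 0 ≤ w y x) (hs : 0 ≤ s) (h : Y → X) :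
    0 ≤ prodMeasure w s h :=
  mul_nonneg hs (prod_nonneg fun y _ => div_nonneg (hw y (h y)) hs)

theorem prodMeasure_comp (σ : Equiv.Perm X) (e : Equiv.Perm Y)
    (hw : ∀ y x, w (e y) (σ x) = w y x) (h : Y → X) :
    prodMeasure w s (σ ∘ h ∘ ⇑e⁻¹) = prodMeasure w s h := by
  unfold prodMeasure
  rw [← Equiv.prod_comp e]
  simp [hw]

variable [Fintype X] [DecidableEq Y]

theorem sum_mul_prod_apply (p : Y → X → ℝ) (φ : X → ℝ) (y : Y) :
    ∑ h : Y → X, φ (h y) * ∏ y', p y' (h y')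
      = (∑ x, φ x * p y x) * ∏ y' ∈ univ.erase y, ∑ x, p y' x := by
  let q : Y → X → ℝ := fun y' x => (if y' = y then φ x else 1) * p y' x
  have hq : ∀ h : Y → X, ∏ y', q y' (h y') = φ (h y) * ∏ y', p y' (h y') := by
    intro h
    rw [prod_mul_distrib, prod_ite_eq' univ y fun y' => φ (h y'), if_pos (mem_univ y)]
  calc ∑ h : Y → X, φ (h y) * ∏ y', p y' (h y')
      = ∏ y', ∑ x, q y' x := by simp only [Fintype.prod_sum, hq]
    _ = (∑ x, φ x * p y x) * ∏ y' ∈ univ.erase y, ∑ x, p y' x := by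
      rw [← mul_prod_erase univ _ (mem_univ y)]
      refine congrArg₂ _ (by simp [q]) (prod_congr rfl fun y' hy' => ?_)
      simp [q, ne_of_mem_erase hy']

theorem sum_mul_prodMeasure (hw : ∀ y x, 0 ≤ w y x) (hs : ∀ y, ∑ x, w y x = s)
    (φ : X → ℝ) (y : Y) :
    ∑ h : Y → X, φ (h y) * prodMeasure w s h = ∑ x, φ x * w y x := by
  by_cases hs0 : s = 0
  · have hw0 : ∀ x, w y x = 0 := fun x =>
      (sum_eq_zero_iff_of_nonneg fun x _ => hw y x).1 ((hs y).trans hs0) x (mem_univ x)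
    simp [prodMeasure, hs0, hw0]
  have hrow : ∀ y', ∑ x, w y' x / s = 1 := fun y' => by rw [← sum_div, hs, div_self hs0]
  calc ∑ h : Y → X, φ (h y) * prodMeasure w s h
      = s * ∑ h : Y → X, φ (h y) * ∏ y', (w y' (h y') / s) := by
        simp only [prodMeasure, mul_sum]
        exact sum_congr rfl fun h _ => by ring
    _ = ∑ x, φ x * w y x := by
        rw [sum_mul_prod_apply (fun y' x => w y' x / s), prod_congr rfl fun y' _ => hrow y',
          prod_const_one, mul_one, mul_sum]
        exact sum_congr rfl fun x _ => by field_simp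

theorem sum_prodMeasure [Nonempty Y] (hw : ∀ y x, 0 ≤ w y x) (hs : ∀ y, ∑ x, w y x = s) :
    ∑ h : Y → X, prodMeasure w s h = s := by
  obtain ⟨y⟩ := ‹Nonempty Y›
  simpa [hs y] using sum_mul_prodMeasure hw hs (fun _ => 1) y

end ProductMeasure

section PermutantMeasure

variable {X Y : Type*} [Fintype X] [Fintype Y]

noncomputable def permutantMeasure (A : Matrix Y X ℝ) (y₀ : Y) : (Y → X) → ℝ :=
  prodMeasure (fun y x => (A y x)⁺) (∑ x, (A y₀ x)⁺) -
    prodMeasure (fun y x => (A y x)⁻) (∑ x, (A y₀ x)⁻)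

variable {A : Matrix Y X ℝ} {y₀ : Y}

theorem permutantMeasure_comp (σ : Equiv.Perm X) (e : Equiv.Perm Y)
    (hA : ∀ y x, A (e y) (σ x) = A y x) (h : Y → X) :
    permutantMeasure A y₀ (σ ∘ h ∘ ⇑e⁻¹) = permutantMeasure A y₀ h := by
  simp only [permutantMeasure, Pi.sub_apply]
  rw [prodMeasure_comp σ e (fun y x => by rw [hA]), prodMeasure_comp σ e (fun y x => by rw [hA])]

variable [DecidableEq Y] (hrow : ∀ (f : ℝ → ℝ) y, ∑ x, f (A y x) = ∑ x, f (A y₀ x))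
include hrow

theorem mulVec_eq_sum_mul_permutantMeasure (φ : X → ℝ) :
    A *ᵥ φ = fun y => ∑ h : Y → X, φ (h y) * permutantMeasure A y₀ h := by
  funext y
  simp only [permutantMeasure, Pi.sub_apply, mul_sub, sum_sub_distrib]
  rw [sum_mul_prodMeasure (fun y x => posPart_nonneg (A y x)) (hrow _),
    sum_mul_prodMeasure (fun y x => negPart_nonneg (A y x)) (hrow _), ← sum_sub_distrib]
  exact sum_congr rfl fun x _ => by rw [← mul_sub, posPart_sub_negPart, mul_comm]

theorem sum_abs_permutantMeasure_le :
    ∑ h : Y → X, |permutantMeasure A y₀ h| ≤ ∑ x, |A y₀ x| := by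
  have : Nonempty Y := ⟨y₀⟩
  have hpos : ∀ y x, 0 ≤ (A y x)⁺ := fun y x => posPart_nonneg _
  have hneg : ∀ y x, 0 ≤ (A y x)⁻ := fun y x => negPart_nonneg _
  calc ∑ h : Y → X, |permutantMeasure A y₀ h|
      ≤ ∑ h : Y → X, (prodMeasure (fun y x => (A y x)⁺) (∑ x, (A y₀ x)⁺) h +
          prodMeasure (fun y x => (A y x)⁻) (∑ x, (A y₀ x)⁻) h) := by
        refine sum_le_sum fun h _ => (abs_sub _ _).trans_eq ?_
        rw [abs_of_nonneg (prodMeasure_nonneg hpos (sum_nonneg fun x _ => hpos y₀ x) h),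
          abs_of_nonneg (prodMeasure_nonneg hneg (sum_nonneg fun x _ => hneg y₀ x) h)]
    _ = ∑ x, |A y₀ x| := by
        rw [sum_add_distrib, sum_prodMeasure hpos (hrow _), sum_prodMeasure hneg (hrow _),
          ← sum_add_distrib]
        simp only [posPart_add_negPart]

end PermutantMeasure

section SupNorm

variable {X Y : Type*} [Fintype X] [Fintype Y]

theorem norm_sum_mul_le [DecidableEq Y] (μ : (Y → X) → ℝ) (φ : X → ℝ) :
    ‖fun y => ∑ h : Y → X, φ (h y) * μ h‖ ≤ (∑ h : Y → X, |μ h|) * ‖φ‖ := by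
  refine (pi_norm_le_iff_of_nonneg (by positivity)).2 fun y => ?_
  calc ‖∑ h : Y → X, φ (h y) * μ h‖
      ≤ ∑ h : Y → X, ‖φ (h y)‖ * |μ h| := by
        simpa only [norm_mul, Real.norm_eq_abs] using norm_sum_le univ fun h => φ (h y) * μ h
    _ ≤ ∑ h : Y → X, ‖φ‖ * |μ h| :=
        sum_le_sum fun h _ => mul_le_mul_of_nonneg_right (norm_le_pi_norm φ (h y)) (abs_nonneg _)
    _ = (∑ h : Y → X, |μ h|) * ‖φ‖ := by rw [← mul_sum, mul_comm]

namespace Matrix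

variable {A : Matrix Y X ℝ} {N : ℝ}

theorem norm_mulVec_le (hN : 0 ≤ N) (hA : ∀ y, ∑ x, |A y x| ≤ N) (φ : X → ℝ) :
    ‖A *ᵥ φ‖ ≤ N * ‖φ‖ := by
  refine (pi_norm_le_iff_of_nonneg (by positivity)).2 fun y => ?_
  calc ‖∑ x, A y x * φ x‖ ≤ ∑ x, |A y x| * ‖φ x‖ := by
        simpa only [norm_mul, Real.norm_eq_abs] using norm_sum_le univ fun x => A y x * φ x
    _ ≤ ∑ x, |A y x| * ‖φ‖ :=
        sum_le_sum fun x _ => mul_le_mul_of_nonneg_left (norm_le_pi_norm φ x) (abs_nonneg _)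
    _ ≤ N * ‖φ‖ := by rw [← sum_mul]; gcongr; exact hA y

theorem isGreatest_norm_mulVec_div_norm [Nonempty X] (y₀ : Y)
    (hA : ∀ y, ∑ x, |A y x| ≤ ∑ x, |A y₀ x|) :
    IsGreatest {r : ℝ | ∃ φ : X → ℝ, φ ≠ 0 ∧ r = ‖A *ᵥ φ‖ / ‖φ‖} (∑ x, |A y₀ x|) := by
  have hN : 0 ≤ ∑ x, |A y₀ x| := sum_nonneg fun x _ => abs_nonneg _
  refine ⟨?_, ?_⟩
  · set φ : X → ℝ := fun x => if A y₀ x < 0 then -1 else 1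
    have hφ : ∀ x, |φ x| = 1 := fun x => by by_cases h : A y₀ x < 0 <;> simp [φ, h]
    have hφ_ne : φ ≠ 0 := fun h0 => by
      simpa [h0] using hφ (Classical.arbitrary X)
    have hφ_pos : 0 < ‖φ‖ := norm_pos_iff.2 hφ_ne
    have hφ_le : ‖φ‖ ≤ 1 := (pi_norm_le_iff_of_nonneg zero_le_one).2 fun x => (hφ x).le
    have hrow : (A *ᵥ φ) y₀ = ∑ x, |A y₀ x| := sum_congr rfl fun x _ => by
      by_cases h : A y₀ x < 0
      · simp [φ, h, abs_of_neg h]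
      · simp [φ, h, abs_of_nonneg (not_lt.1 h)]
    refine ⟨φ, hφ_ne, le_antisymm ?_ ?_⟩
    · rw [le_div_iff₀ hφ_pos]
      calc (∑ x, |A y₀ x|) * ‖φ‖ ≤ ∑ x, |A y₀ x| := mul_le_of_le_one_right hN hφ_le
        _ = ‖(A *ᵥ φ) y₀‖ := by rw [hrow, Real.norm_of_nonneg hN]
        _ ≤ ‖A *ᵥ φ‖ := norm_le_pi_norm _ y₀
    · rw [div_le_iff₀ hφ_pos]
      exact norm_mulVec_le hN hA φ
  · rintro r ⟨φ, hφ, rfl⟩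
    rw [div_le_iff₀ (norm_pos_iff.2 hφ)]
    exact norm_mulVec_le hN hA φ

end Matrix

end SupNorm

/-- If `T(G)` acts transitively on `Y` and `F` is a linear `T`-equivariant map,
then `F` is represented by a generalized `T`-permutant measure `μ` with
`Σ_h |μ(h)| = max_{φ ≠ 0} ‖F(φ)‖_∞ / ‖φ‖_∞` (the sup norms are the norms of
the finite product `Pi` types). -/
theorem stmt_8 {X Y : Type*} [Fintype X] [Fintype Y] [DecidableEq Y]
    [Nonempty X] [Nonempty Y]
    (G : Subgroup (Equiv.Perm X)) (K : Subgroup (Equiv.Perm Y)) (T : G →* K)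
    (htrans : ∀ y y' : Y, ∃ g : G, ((T g : K) : Equiv.Perm Y) y = y')
    (F : (X → ℝ) →ₗ[ℝ] (Y → ℝ))
    (hequiv : ∀ (g : G) (φ : X → ℝ),
      F (φ ∘ ⇑(g : Equiv.Perm X)) = F φ ∘ ⇑((T g : K) : Equiv.Perm Y)) :
    ∃ μ : (Y → X) → ℝ,
      (∀ (g : G) (h : Y → X),
        μ h = μ (⇑(g : Equiv.Perm X) ∘ h ∘ ⇑((T g⁻¹ : K) : Equiv.Perm Y))) ∧
      (∀ φ : X → ℝ, F φ = fun y => ∑ h : Y → X, φ (h y) * μ h) ∧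
      IsGreatest {r : ℝ | ∃ φ : X → ℝ, φ ≠ 0 ∧ r = ‖F φ‖ / ‖φ‖}
        (∑ h : Y → X, |μ h|) := by
  classical
  obtain ⟨y₀⟩ := ‹Nonempty Y›
  set A := LinearMap.toMatrix' F
  have hF : ∀ φ, F φ = A *ᵥ φ := fun φ => (F.toMatrix'_mulVec φ).symm
  have hA : ∀ (g : G) y x,
      A ((T g : Equiv.Perm Y) y) ((g : Equiv.Perm X) x) = A y x := fun g =>
    LinearMap.toMatrix'_perm_apply_perm (hequiv g)
  have hrow : ∀ (f : ℝ → ℝ) y, ∑ x, f (A y x) = ∑ x, f (A y₀ x) := fun f y => by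
    obtain ⟨g, rfl⟩ := htrans y₀ y
    exact Matrix.sum_comp_perm_row (hA g) f y₀
  have hμ : ∀ φ, F φ = fun y => ∑ h : Y → X, φ (h y) * permutantMeasure A y₀ h := fun φ =>
    (hF φ).trans (mulVec_eq_sum_mul_permutantMeasure hrow φ)
  have hS : IsGreatest {r : ℝ | ∃ φ : X → ℝ, φ ≠ 0 ∧ r = ‖F φ‖ / ‖φ‖} (∑ x, |A y₀ x|) := by
    simp only [hF]
    exact Matrix.isGreatest_norm_mulVec_div_norm y₀ fun y => (hrow _ y).le
  refine ⟨permutantMeasure A y₀, fun g h => ?_, hμ, ?_⟩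
  · rw [map_inv, Subgroup.coe_inv, permutantMeasure_comp _ _ (hA g)]
  · obtain ⟨φ, hφ, hnorm⟩ := hS.1
    have hge : ∑ x, |A y₀ x| ≤ ∑ h : Y → X, |permutantMeasure A y₀ h| := by
      rw [hnorm, div_le_iff₀ (norm_pos_iff.2 hφ), hμ]
      exact norm_sum_mul_le _ φ
    rwa [le_antisymm (sum_abs_permutantMeasure_le hrow) hge]
end

section
/- Assume T(G) acts transitively on Y and let F : ℝ^X → ℝ^Y. Then (F, T) is a linear GENEO (linear, T-equivariant, and non-expansive with respect to the sup norms) if and only if there exists a generalized T-permutant measure μ on X^Y with F(φ) = Σ_{h ∈ X^Y} (φ ∘ h) μ(h) for all φ and Σ_{h ∈ X^Y} |μ(h)| ≤ 1. -/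
open Finset

section aux

variable {X Y : Type*} [Fintype X] [Fintype Y] [DecidableEq Y]

lemma aux_sum_prod (f : Y → X → ℝ) :
    ∑ h : Y → X, ∏ y, f y (h y) = ∏ y, ∑ x, f y x :=
  (Fintype.prod_sum f).symm

lemma aux_marginal (f : Y → X → ℝ) (φ : X → ℝ) (y : Y) :
    ∑ h : Y → X, φ (h y) * ∏ y', f y' (h y') =
      (∑ x, φ x * f y x) * ∏ y' ∈ univ.erase y, ∑ x, f y' x := by
  classical
  set f' : Y → X → ℝ := fun y' x => if y' = y then φ x * f y' x else f y' x with hf'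
  have h1 : ∀ h : Y → X, φ (h y) * ∏ y', f y' (h y') = ∏ y', f' y' (h y') := by
    intro h
    rw [← Finset.mul_prod_erase univ (fun y' => f y' (h y')) (mem_univ y),
        ← Finset.mul_prod_erase univ (fun y' => f' y' (h y')) (mem_univ y)]
    simp only [hf', if_pos rfl]
    rw [← mul_assoc]
    congr 1
    exact Finset.prod_congr rfl fun z hz => (if_neg (Finset.ne_of_mem_erase hz)).symm
  calc ∑ h : Y → X, φ (h y) * ∏ y', f y' (h y')
      = ∑ h : Y → X, ∏ y', f' y' (h y') := Finset.sum_congr rfl fun h _ => h1 h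
    _ = ∏ y', ∑ x, f' y' x := aux_sum_prod f'
    _ = (∑ x, φ x * f y x) * ∏ y' ∈ univ.erase y, ∑ x, f y' x := by
        rw [← Finset.mul_prod_erase univ (fun y' => ∑ x, f' y' x) (mem_univ y)]
        simp only [hf', if_pos rfl]
        congr 1
        exact Finset.prod_congr rfl fun z hz => by
          exact Finset.sum_congr rfl fun x _ => if_neg (Finset.ne_of_mem_erase hz)

end aux

/-- Representation theorem for linear GENEOs: assuming `T(G)` acts transitively
on `Y`, `(F, T)` is a linear GENEO (linear, `T`-equivariant, non-expansive for
the sup norms) iff `F` is represented by a generalized `T`-permutant measure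
`μ` with `Σ_h |μ(h)| ≤ 1`. -/
theorem stmt_9 {X Y : Type*} [Fintype X] [Fintype Y] [DecidableEq Y]
    (G : Subgroup (Equiv.Perm X)) (K : Subgroup (Equiv.Perm Y)) (T : G →* K)
    (htrans : ∀ y y' : Y, ∃ g : G, ((T g : K) : Equiv.Perm Y) y = y')
    (F : (X → ℝ) → (Y → ℝ)) :
    ((∀ φ ψ : X → ℝ, F (φ + ψ) = F φ + F ψ) ∧
     (∀ (c : ℝ) (φ : X → ℝ), F (c • φ) = c • F φ) ∧
     (∀ (g : G) (φ : X → ℝ),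
       F (φ ∘ ⇑(g : Equiv.Perm X)) = F φ ∘ ⇑((T g : K) : Equiv.Perm Y)) ∧
     (∀ φ₁ φ₂ : X → ℝ, ‖F φ₁ - F φ₂‖ ≤ ‖φ₁ - φ₂‖)) ↔
    (∃ μ : (Y → X) → ℝ,
      (∀ (g : G) (h : Y → X),
        μ h = μ (⇑(g : Equiv.Perm X) ∘ h ∘ ⇑((T g⁻¹ : K) : Equiv.Perm Y))) ∧
      (∀ φ : X → ℝ, F φ = fun y => ∑ h : Y → X, φ (h y) * μ h) ∧
      (∑ h : Y → X, |μ h|) ≤ 1) := by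
  classical
  have hTinv : ∀ g : G, ((T g⁻¹ : K) : Equiv.Perm Y) = (((T g : K) : Equiv.Perm Y))⁻¹ := by
    intro g; simp [map_inv]
  constructor
  · rintro ⟨hadd, hsmul, hequiv, hnexp⟩
    have F0 : F 0 = 0 := by simpa using hsmul 0 0
    rcases isEmpty_or_nonempty Y with hY | hY
    · refine ⟨fun _ => 0, fun _ _ => rfl, fun φ => funext fun y => hY.elim y, by simp⟩
    -- basic linear-algebra representation
    set δ : X → X → ℝ := fun x x' => if x' = x then 1 else 0 with hδ
    set a : Y → X → ℝ := fun y x => F (δ x) y with ha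
    set L : (X → ℝ) →ₗ[ℝ] (Y → ℝ) :=
      { toFun := F, map_add' := hadd, map_smul' := hsmul } with hL
    have hrep : ∀ φ : X → ℝ, φ = ∑ x, φ x • δ x := by
      intro φ; funext x'
      simp only [Finset.sum_apply, Pi.smul_apply, smul_eq_mul, hδ, mul_ite, mul_one, mul_zero]
      rw [Finset.sum_ite_eq univ x' φ]; simp
    have hFφ : ∀ (φ : X → ℝ) (y : Y), F φ y = ∑ x, φ x * a y x := by
      intro φ y
      conv_lhs => rw [hrep φ]
      show L (∑ x, φ x • δ x) y = _
      rw [map_sum]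
      simp [Finset.sum_apply, ha, hL]
    have hnorm : ∀ φ : X → ℝ, ‖F φ‖ ≤ ‖φ‖ := by
      intro φ; simpa [F0] using hnexp φ 0
    have hbound : ∀ y : Y, ∑ x, |a y x| ≤ 1 := by
      intro y
      set φ : X → ℝ := fun x => if 0 ≤ a y x then 1 else -1 with hφdef
      have hφ : ‖φ‖ ≤ 1 := by
        rw [pi_norm_le_iff_of_nonneg zero_le_one]
        intro x
        by_cases h : 0 ≤ a y x <;> simp [hφdef, h, Real.norm_eq_abs]
      have h1 : ∑ x, |a y x| = F φ y := by
        rw [hFφ]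
        refine Finset.sum_congr rfl fun x _ => ?_
        by_cases h : 0 ≤ a y x
        · simp [hφdef, h, abs_of_nonneg h]
        · simp [hφdef, h, abs_of_neg (lt_of_not_ge h)]
      calc ∑ x, |a y x| = F φ y := h1
        _ ≤ |F φ y| := le_abs_self _
        _ ≤ ‖F φ‖ := by
            simpa [Real.norm_eq_abs] using norm_le_pi_norm (F φ) y
        _ ≤ ‖φ‖ := hnorm φ
        _ ≤ 1 := hφ
    have hequiv' : ∀ (g : G) (y : Y) (x : X),
        a (((T g : K) : Equiv.Perm Y) y) ((g : Equiv.Perm X) x) = a y x := by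
      intro g y x
      have hδg : δ ((g : Equiv.Perm X) x) ∘ ⇑(g : Equiv.Perm X) = δ x := by
        funext x'
        simp only [Function.comp_apply, hδ]
        rw [(g : Equiv.Perm X).injective.eq_iff]
      have := hequiv g (δ ((g : Equiv.Perm X) x))
      rw [hδg] at this
      have := congrFun this y
      simp only [Function.comp_apply] at this
      simp only [ha]
      exact this.symm
    -- positive and negative parts
    set ap : Y → X → ℝ := fun y x => max (a y x) 0 with hap
    set am : Y → X → ℝ := fun y x => max (-(a y x)) 0 with ham
    have hap_nonneg : ∀ y x, 0 ≤ ap y x := fun y x => le_max_right _ _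
    have ham_nonneg : ∀ y x, 0 ≤ am y x := fun y x => le_max_right _ _
    have hap_eq : ∀ (g : G) (y : Y) (x : X),
        ap (((T g : K) : Equiv.Perm Y) y) ((g : Equiv.Perm X) x) = ap y x := by
      intro g y x; simp [hap, hequiv' g y x]
    have ham_eq : ∀ (g : G) (y : Y) (x : X),
        am (((T g : K) : Equiv.Perm Y) y) ((g : Equiv.Perm X) x) = am y x := by
      intro g y x; simp [ham, hequiv' g y x]
    have hsum_const : ∀ (b : Y → X → ℝ),
        (∀ (g : G) (y : Y) (x : X),
          b (((T g : K) : Equiv.Perm Y) y) ((g : Equiv.Perm X) x) = b y x) →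
        ∀ y y' : Y, ∑ x, b y x = ∑ x, b y' x := by
      intro b hb y y'
      obtain ⟨g, hg⟩ := htrans y y'
      rw [← hg]
      exact Fintype.sum_equiv (g : Equiv.Perm X) _ _ fun x => (hb g y x).symm
    obtain ⟨y₀⟩ := hY
    set n := Fintype.card Y with hn
    have hn1 : 1 ≤ n := Fintype.card_pos_iff.mpr ⟨y₀⟩
    set p := ∑ x, ap y₀ x with hp
    set q := ∑ x, am y₀ x with hq
    have hpy : ∀ y, ∑ x, ap y x = p := fun y => hsum_const ap hap_eq y y₀
    have hqy : ∀ y, ∑ x, am y x = q := fun y => hsum_const am ham_eq y y₀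
    have hp0 : 0 ≤ p := Finset.sum_nonneg fun x _ => hap_nonneg y₀ x
    have hq0 : 0 ≤ q := Finset.sum_nonneg fun x _ => ham_nonneg y₀ x
    -- if p = 0 then ap vanishes
    have hap_zero : p = 0 → ∀ y x, ap y x = 0 := by
      intro h y x
      have : ∑ x, ap y x = 0 := by rw [hpy y, h]
      exact (Finset.sum_eq_zero_iff_of_nonneg fun x _ => hap_nonneg y x).mp this x (mem_univ x)
    have ham_zero : q = 0 → ∀ y x, am y x = 0 := by
      intro h y x
      have : ∑ x, am y x = 0 := by rw [hqy y, h]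
      exact (Finset.sum_eq_zero_iff_of_nonneg fun x _ => ham_nonneg y x).mp this x (mem_univ x)
    set A : (Y → X) → ℝ := fun h => (∏ y, ap y (h y)) / p ^ (n - 1) with hA
    set B : (Y → X) → ℝ := fun h => (∏ y, am y (h y)) / q ^ (n - 1) with hB
    have hA_nonneg : ∀ h, 0 ≤ A h := fun h =>
      div_nonneg (Finset.prod_nonneg fun y _ => hap_nonneg y (h y)) (pow_nonneg hp0 _)
    have hB_nonneg : ∀ h, 0 ≤ B h := fun h =>
      div_nonneg (Finset.prod_nonneg fun y _ => ham_nonneg y (h y)) (pow_nonneg hq0 _)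
    refine ⟨fun h => A h - B h, ?_, ?_, ?_⟩
    · -- invariance
      intro g h
      have key : ∀ (b : Y → X → ℝ),
          (∀ (g : G) (y : Y) (x : X),
            b (((T g : K) : Equiv.Perm Y) y) ((g : Equiv.Perm X) x) = b y x) →
          (∏ y, b y ((⇑(g : Equiv.Perm X) ∘ h ∘ ⇑((T g⁻¹ : K) : Equiv.Perm Y)) y))
            = ∏ y, b y (h y) := by
        intro b hb
        rw [hTinv g]
        set σ := ((T g : K) : Equiv.Perm Y) with hσ
        have : ∀ y : Y, b (σ y) ((g : Equiv.Perm X) (h y))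
            = (fun y => b y ((⇑(g : Equiv.Perm X) ∘ h ∘ ⇑σ⁻¹) y)) (σ y) := by
          intro y; simp
        calc ∏ y, b y ((⇑(g : Equiv.Perm X) ∘ h ∘ ⇑σ⁻¹) y)
            = ∏ y, b (σ y) ((g : Equiv.Perm X) (h y)) :=
              (Fintype.prod_equiv σ _ _ this).symm
          _ = ∏ y, b y (h y) := Finset.prod_congr rfl fun y _ => hb g y (h y)
      simp only [hA, hB]
      rw [key ap hap_eq, key am ham_eq]
    · -- representation
      intro φ
      funext y
      have main : ∀ (b : Y → X → ℝ) (r : ℝ), (∀ y, ∑ x, b y x = r) → 0 ≤ r →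
          (r = 0 → ∀ y x, b y x = 0) →
          ∑ h : Y → X, φ (h y) * ((∏ y', b y' (h y')) / r ^ (n - 1))
            = ∑ x, φ x * b y x := by
        intro b r hbr hr0 hbz
        have : ∑ h : Y → X, φ (h y) * ((∏ y', b y' (h y')) / r ^ (n - 1))
            = (∑ h : Y → X, φ (h y) * ∏ y', b y' (h y')) / r ^ (n - 1) := by
          rw [Finset.sum_div]
          exact Finset.sum_congr rfl fun h _ => by rw [mul_div_assoc]
        rw [this, aux_marginal]
        have hprod : ∏ y' ∈ univ.erase y, ∑ x, b y' x = r ^ (n - 1) := by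
          rw [Finset.prod_congr rfl fun y' _ => hbr y', Finset.prod_const,
            Finset.card_erase_of_mem (mem_univ y), Finset.card_univ]
        rw [hprod]
        rcases eq_or_ne r 0 with h | h
        · have : ∑ x, φ x * b y x = 0 :=
            Finset.sum_eq_zero fun x _ => by rw [hbz h y x, mul_zero]
          rw [this, zero_mul, zero_div]
        · rw [mul_div_assoc, div_self (pow_ne_zero _ h), mul_one]
      have expand : ∑ h : Y → X, φ (h y) * (A h - B h)
          = (∑ h : Y → X, φ (h y) * A h) - ∑ h : Y → X, φ (h y) * B h := by
        rw [← Finset.sum_sub_distrib]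
        exact Finset.sum_congr rfl fun h _ => mul_sub _ _ _
      rw [expand, main ap p hpy hp0 hap_zero, main am q hqy hq0 ham_zero,
        ← Finset.sum_sub_distrib]
      rw [hFφ φ y]
      refine Finset.sum_congr rfl fun x _ => ?_
      rw [← mul_sub]
      congr 1
      simp only [hap, ham]
      exact (max_zero_sub_max_neg_zero_eq_self (a y x)).symm
    · -- total mass
      have hsum : ∀ (b : Y → X → ℝ) (r : ℝ), (∀ y, ∑ x, b y x = r) →
          ∑ h : Y → X, (∏ y', b y' (h y')) / r ^ (n - 1) = r ^ n / r ^ (n - 1) := by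
        intro b r hbr
        rw [← Finset.sum_div, aux_sum_prod,
          Finset.prod_congr rfl fun y' _ => hbr y', Finset.prod_const, Finset.card_univ]
      have hAsum : ∑ h : Y → X, A h = p := by
        rw [hA]
        simp only
        rw [hsum ap p hpy]
        rcases eq_or_ne p 0 with h | h
        · rw [h, zero_pow (by omega), zero_div]
        · rw [div_eq_iff (pow_ne_zero _ h), mul_comm, ← pow_succ, Nat.sub_add_cancel hn1]
      have hBsum : ∑ h : Y → X, B h = q := by
        rw [hB]
        simp only
        rw [hsum am q hqy]
        rcases eq_or_ne q 0 with h | h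
        · rw [h, zero_pow (by omega), zero_div]
        · rw [div_eq_iff (pow_ne_zero _ h), mul_comm, ← pow_succ, Nat.sub_add_cancel hn1]
      calc ∑ h : Y → X, |A h - B h| ≤ ∑ h : Y → X, (A h + B h) := by
            refine Finset.sum_le_sum fun h _ => ?_
            calc |A h - B h| ≤ |A h| + |B h| := abs_sub _ _
              _ = A h + B h := by
                  rw [abs_of_nonneg (hA_nonneg h), abs_of_nonneg (hB_nonneg h)]
        _ = p + q := by rw [Finset.sum_add_distrib, hAsum, hBsum]
        _ = ∑ x, |a y₀ x| := by
            rw [hp, hq, ← Finset.sum_add_distrib]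
            refine Finset.sum_congr rfl fun x _ => ?_
            simp only [hap, ham]
            rcases le_total 0 (a y₀ x) with h | h
            · rw [abs_of_nonneg h, max_eq_left h, max_eq_right (neg_nonpos.mpr h), add_zero]
            · rw [abs_of_nonpos h, max_eq_right h, max_eq_left (neg_nonneg.mpr h), zero_add]
        _ ≤ 1 := hbound y₀
  · rintro ⟨μ, hμinv, hμrep, hμmass⟩
    refine ⟨?_, ?_, ?_, ?_⟩
    · intro φ ψ
      rw [hμrep, hμrep, hμrep]
      funext y
      simp [Pi.add_apply, add_mul, Finset.sum_add_distrib]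
    · intro c φ
      rw [hμrep, hμrep]
      funext y
      simp [Finset.mul_sum, mul_assoc]
    · intro g φ
      rw [hμrep, hμrep]
      funext y
      simp only [Function.comp_apply]
      set σ := ((T g : K) : Equiv.Perm Y) with hσ
      set e : (Y → X) ≃ (Y → X) := Equiv.arrowCongr σ (g : Equiv.Perm X) with he
      refine Fintype.sum_equiv e _ _ fun h => ?_
      have h1 : e h (σ y) = (g : Equiv.Perm X) (h y) := by
        simp [he, Equiv.arrowCongr_apply, Function.comp_apply]
      have h2 : μ (e h) = μ h := by
        rw [hμinv g h, hTinv g]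
        congr 1
      rw [h1, h2]
    · intro φ₁ φ₂
      rw [hμrep, hμrep]
      rw [pi_norm_le_iff_of_nonneg (norm_nonneg _)]
      intro y
      simp only [Pi.sub_apply, Real.norm_eq_abs]
      rw [← Finset.sum_sub_distrib]
      calc |∑ h : Y → X, (φ₁ (h y) * μ h - φ₂ (h y) * μ h)|
          ≤ ∑ h : Y → X, |φ₁ (h y) * μ h - φ₂ (h y) * μ h| := Finset.abs_sum_le_sum_abs _ _
        _ ≤ ∑ h : Y → X, ‖φ₁ - φ₂‖ * |μ h| := by
            refine Finset.sum_le_sum fun h _ => ?_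
            rw [← sub_mul, abs_mul]
            refine mul_le_mul_of_nonneg_right ?_ (abs_nonneg _)
            have := norm_le_pi_norm (φ₁ - φ₂) (h y)
            simpa [Real.norm_eq_abs] using this
        _ = ‖φ₁ - φ₂‖ * ∑ h : Y → X, |μ h| := by rw [Finset.mul_sum]
        _ ≤ ‖φ₁ - φ₂‖ * 1 := mul_le_mul_of_nonneg_left hμmass (norm_nonneg _)
        _ = ‖φ₁ - φ₂‖ := mul_one _
end

section
/- Fix a group homomorphism T : G → K. The set of linear GENEOs from (ℝ^X, G) to (ℝ^Y, K) with respect to T, viewed as a subset of the space of linear maps from ℝ^X to ℝ^Y with the operator norm induced by sup norms, is compact and convex. -/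
/-- The set of linear GENEOs from `(ℝ^X, G)` to `(ℝ^Y, K)` with respect to a
fixed homomorphism `T`, viewed inside the space of continuous linear maps
`(X → ℝ) →L[ℝ] (Y → ℝ)` with the operator norm induced by the sup norms, is
compact and convex. -/
theorem stmt_13 {X Y : Type*} [Fintype X] [Fintype Y]
    (G : Subgroup (Equiv.Perm X)) (K : Subgroup (Equiv.Perm Y)) (T : G →* K) :
    IsCompact {F : (X → ℝ) →L[ℝ] (Y → ℝ) |
        (∀ (g : G) (φ : X → ℝ),
          F (φ ∘ ⇑(g : Equiv.Perm X)) = F φ ∘ ⇑((T g : K) : Equiv.Perm Y)) ∧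
        (∀ φ₁ φ₂ : X → ℝ, ‖F φ₁ - F φ₂‖ ≤ ‖φ₁ - φ₂‖)} ∧
    Convex ℝ {F : (X → ℝ) →L[ℝ] (Y → ℝ) |
        (∀ (g : G) (φ : X → ℝ),
          F (φ ∘ ⇑(g : Equiv.Perm X)) = F φ ∘ ⇑((T g : K) : Equiv.Perm Y)) ∧
        (∀ φ₁ φ₂ : X → ℝ, ‖F φ₁ - F φ₂‖ ≤ ‖φ₁ - φ₂‖)} := by
  set S : Set ((X → ℝ) →L[ℝ] (Y → ℝ)) :=
    {F : (X → ℝ) →L[ℝ] (Y → ℝ) |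
        (∀ (g : G) (φ : X → ℝ),
          F (φ ∘ ⇑(g : Equiv.Perm X)) = F φ ∘ ⇑((T g : K) : Equiv.Perm Y)) ∧
        (∀ φ₁ φ₂ : X → ℝ, ‖F φ₁ - F φ₂‖ ≤ ‖φ₁ - φ₂‖)} with hS
  have happly : ∀ ψ : X → ℝ,
      Continuous fun F : (X → ℝ) →L[ℝ] (Y → ℝ) => F ψ := fun ψ =>
    (ContinuousLinearMap.apply ℝ (Y → ℝ) ψ).continuous
  have hclosed : IsClosed S := by
    have h1 : IsClosed {F : (X → ℝ) →L[ℝ] (Y → ℝ) |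
        ∀ (g : G) (φ : X → ℝ),
          F (φ ∘ ⇑(g : Equiv.Perm X)) = F φ ∘ ⇑((T g : K) : Equiv.Perm Y)} := by
      have : {F : (X → ℝ) →L[ℝ] (Y → ℝ) |
          ∀ (g : G) (φ : X → ℝ),
            F (φ ∘ ⇑(g : Equiv.Perm X)) = F φ ∘ ⇑((T g : K) : Equiv.Perm Y)} =
          ⋂ (g : G) (φ : X → ℝ),
            {F | F (φ ∘ ⇑(g : Equiv.Perm X)) = F φ ∘ ⇑((T g : K) : Equiv.Perm Y)} := by
        ext F; simp [Set.mem_iInter]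
      rw [this]
      refine isClosed_iInter fun g => isClosed_iInter fun φ => ?_
      refine isClosed_eq (happly _) ?_
      exact continuous_pi fun y =>
        ((continuous_apply (((T g : K) : Equiv.Perm Y) y)).comp (happly φ))
    have h2 : IsClosed {F : (X → ℝ) →L[ℝ] (Y → ℝ) |
        ∀ φ₁ φ₂ : X → ℝ, ‖F φ₁ - F φ₂‖ ≤ ‖φ₁ - φ₂‖} := by
      have : {F : (X → ℝ) →L[ℝ] (Y → ℝ) |
          ∀ φ₁ φ₂ : X → ℝ, ‖F φ₁ - F φ₂‖ ≤ ‖φ₁ - φ₂‖} =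
          ⋂ (φ₁ : X → ℝ) (φ₂ : X → ℝ), {F | ‖F φ₁ - F φ₂‖ ≤ ‖φ₁ - φ₂‖} := by
        ext F; simp [Set.mem_iInter]
      rw [this]
      refine isClosed_iInter fun φ₁ => isClosed_iInter fun φ₂ => ?_
      exact isClosed_le (((happly φ₁).sub (happly φ₂)).norm) continuous_const
    have : S = _ ∩ _ := rfl
    exact h1.inter h2
  have hbdd : S ⊆ Metric.closedBall 0 1 := by
    intro F hF
    rw [Metric.mem_closedBall, dist_zero_right]
    refine ContinuousLinearMap.opNorm_le_bound F zero_le_one fun φ => ?_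
    have := hF.2 φ 0
    simpa using this
  constructor
  · exact (Metric.isCompact_of_isClosed_isBounded hclosed
      (Metric.isBounded_closedBall.subset hbdd))
  · intro F hF F' hF' a b ha hb hab
    refine ⟨fun g φ => ?_, fun φ₁ φ₂ => ?_⟩
    · funext y
      simp only [ContinuousLinearMap.add_apply, ContinuousLinearMap.coe_smul',
        Pi.smul_apply, Pi.add_apply, Function.comp_apply]
      rw [hF.1 g φ, hF'.1 g φ]
      simp
    · have h1 := hF.2 φ₁ φ₂
      have h2 := hF'.2 φ₁ φ₂
      have : (a • F + b • F') φ₁ - (a • F + b • F') φ₂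
          = a • (F φ₁ - F φ₂) + b • (F' φ₁ - F' φ₂) := by
        simp only [ContinuousLinearMap.add_apply, ContinuousLinearMap.coe_smul',
          Pi.smul_apply]
        module
      rw [this]
      calc ‖a • (F φ₁ - F φ₂) + b • (F' φ₁ - F' φ₂)‖
          ≤ ‖a • (F φ₁ - F φ₂)‖ + ‖b • (F' φ₁ - F' φ₂)‖ := norm_add_le _ _
        _ ≤ a * ‖φ₁ - φ₂‖ + b * ‖φ₁ - φ₂‖ := by
            gcongr
            · rw [norm_smul, Real.norm_of_nonneg ha]; exact mul_le_mul_of_nonneg_left h1 ha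
            · rw [norm_smul, Real.norm_of_nonneg hb]; exact mul_le_mul_of_nonneg_left h2 hb
        _ = ‖φ₁ - φ₂‖ := by rw [← add_mul, hab, one_mul]
end
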